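/- If G is an upper embeddable connected graph and G̲ is a weak minor of G (obtained from G by a sequence of edge contractions), then G̲ is upper embeddable. -/

import Mathlib

/-- A finite multigraph: loops and parallel edges allowed.  Each edge has an
ordered pair of endpoints (the order is irrelevant for all graph notions). -/
structure Multigraph where
  V : Type
  E : Type
  fintypeV : Fintype V
  fintypeE : Fintype E
  decEqV : DecidableEq V
  decEqE : DecidableEq E
  ends : E → V × V

attribute [instance] Multigraph.fintypeV Multigraph.fintypeE Multigraph.decEqV Multigraph.decEqE

namespace Multigraph

variable (G : Multigraph)

/-- Adjacency inside the vertex set `S`, using only edges from `F`. -/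
def AdjW (S : Set G.V) (F : Set G.E) (u v : G.V) : Prop :=
  u ∈ S ∧ v ∈ S ∧ ∃ e ∈ F, G.ends e = (u, v) ∨ G.ends e = (v, u)

/-- Reachability inside the vertex set `S`, using only edges from `F`. -/
def ReachW (S : Set G.V) (F : Set G.E) : G.V → G.V → Prop :=
  Relation.ReflTransGen (G.AdjW S F)

/-- The multigraph is connected. -/
def Connected : Prop := ∀ u v : G.V, G.ReachW Set.univ Set.univ u v

def Incident (e : G.E) (v : G.V) : Prop := (G.ends e).1 = v ∨ (G.ends e).2 = v

/-- `T` is (the edge set of) a spanning tree: the edges of `T` connect all the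
vertices, and every edge of `T` is a bridge of `(V, T)`. -/
def IsSpanningTree (T : Set G.E) : Prop :=
  (∀ u v : G.V, G.ReachW Set.univ T u v) ∧
  ∀ e ∈ T, ¬ G.ReachW Set.univ (T \ {e}) (G.ends e).1 (G.ends e).2

/-- The deficiency `ξ(G,T)`: the number of connected components of `G - E(T)`
containing an odd number of edges. -/
noncomputable def xiT (T : Set G.E) : ℕ :=
  Nat.card {c : Quot (G.ReachW Set.univ Tᶜ) //
    Odd (Nat.card {e : G.E // e ∉ T ∧ Quot.mk (G.ReachW Set.univ Tᶜ) (G.ends e).1 = c})}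

/-- The deficiency `ξ(G)`: the minimum of `ξ(G,T)` over all spanning trees. -/
noncomputable def xi : ℕ := sInf {n : ℕ | ∃ T : Set G.E, G.IsSpanningTree T ∧ G.xiT T = n}

/-- The Betti number (cycle rank) `β(G) = |E| - |V| + 1`. -/
def betti : ℕ := Fintype.card G.E + 1 - Fintype.card G.V

/-- The vertex at which a dart (an edge together with a chosen end) is based. -/
def dartV (d : G.E × Bool) : G.V := if d.2 then (G.ends d.1).1 else (G.ends d.1).2

/-- Degree of a vertex: the number of edge-ends at it (loops count twice). -/
noncomputable def degree (v : G.V) : ℕ := Nat.card {d : G.E × Bool // G.dartV d = v}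

/-- A rotation system: a permutation of the darts preserving the base vertex
(its cycles at each vertex give the local rotations of a cellular embedding). -/
def IsRotation (ρ : Equiv.Perm (G.E × Bool)) : Prop := ∀ d, G.dartV (ρ d) = G.dartV d

/-- The number of faces of the cellular embedding determined by a rotation
system: the number of orbits of face-tracing. -/
noncomputable def numFaces (ρ : Equiv.Perm (G.E × Bool)) : ℕ :=
  Nat.card (Quot (fun x y : G.E × Bool => y = ρ (x.1, !x.2)))

/-- The maximum (orientable) genus: the largest `g` such that some rotation
system yields, via Euler's formula `|V| - |E| + F = 2 - 2g`, an embedding of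
genus `g`. -/
noncomputable def maxGenus : ℕ :=
  sSup {g : ℕ | ∃ ρ : Equiv.Perm (G.E × Bool), G.IsRotation ρ ∧
    (Fintype.card G.V : ℤ) - Fintype.card G.E + G.numFaces ρ = 2 - 2 * g}

/-- `G` is upper embeddable: `γ_M(G) = ⌊β(G)/2⌋`. -/
def UpperEmbeddable : Prop := G.maxGenus = G.betti / 2

/-- The set of neighbors of `v` (so `v ∈ N(v)` iff there is a loop at `v`). -/
def neighborSet (v : G.V) : Set G.V :=
  {u | ∃ e : G.E, G.ends e = (v, u) ∨ G.ends e = (u, v)}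

/-- The induced subgraph on `S` is connected. -/
def ConnectedOn (S : Set G.V) : Prop :=
  ∀ u ∈ S, ∀ v ∈ S, G.ReachW S Set.univ u v

/-- `e` is a cut-edge (bridge) of the subgraph induced on `S`. -/
def IsCutEdgeOn (S : Set G.V) (e : G.E) : Prop :=
  (G.ends e).1 ∈ S ∧ (G.ends e).2 ∈ S ∧
  ¬ G.ReachW S {e}ᶜ (G.ends e).1 (G.ends e).2

/-- Auxiliary map for vertex splitting: where an end of an edge goes.
`Sum.inl v` plays the role of `v'`, and `Sum.inr ()` the role of `v''`. -/
def splitEnd (v u : G.V) (b : Bool) : G.V ⊕ Unit :=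
  if u = v then (if b then Sum.inl v else Sum.inr ()) else Sum.inl u

/-- The graph obtained from `G` by splitting `v` into two adjacent vertices
`v' = Sum.inl v` and `v'' = Sum.inr ()`, joined by the new splitting edge
`none`; the assignment `a` decides, for each end of each former edge at `v`,
whether it is attached to `v'` (`true`) or to `v''` (`false`). -/
def split (v : G.V) (a : G.E → Bool × Bool) : Multigraph where
  V := G.V ⊕ Unit
  E := Option G.E
  fintypeV := inferInstance
  fintypeE := inferInstance
  decEqV := inferInstance
  decEqE := inferInstance
  ends := fun e? => match e? with
    | none => (Sum.inl v, Sum.inr ())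
    | some e => (G.splitEnd v (G.ends e).1 (a e).1, G.splitEnd v (G.ends e).2 (a e).2)

/-- The vertex set of the `v`-splitting subgraph `G*_spl(v)`: `v'`, `v''`, and
all their neighbors in the split graph. -/
def splitSet (v : G.V) (a : G.E → Bool × Bool) : Set (G.split v a).V :=
  {x | x = Sum.inl v ∨ x = Sum.inr () ∨
    x ∈ (G.split v a).neighborSet (Sum.inl v) ∨ x ∈ (G.split v a).neighborSet (Sum.inr ())}

/-- Auxiliary map for edge contraction: the image of a vertex. -/
def contractEnd (e₀ : G.E) (u : G.V) :
    {x : G.V // x = (G.ends e₀).1 ∨ x ≠ (G.ends e₀).2} :=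
  if h : u = (G.ends e₀).2 then ⟨(G.ends e₀).1, Or.inl rfl⟩ else ⟨u, Or.inr h⟩

/-- The graph obtained from `G` by contracting the edge `e₀` (identifying its
two endpoints and deleting `e₀`; parallel edges and loops are retained). -/
def contract (e₀ : G.E) : Multigraph where
  V := {u : G.V // u = (G.ends e₀).1 ∨ u ≠ (G.ends e₀).2}
  E := {e : G.E // e ≠ e₀}
  fintypeV := inferInstance
  fintypeE := inferInstance
  decEqV := inferInstance
  decEqE := inferInstance
  ends := fun e => (G.contractEnd e₀ (G.ends e.1).1, G.contractEnd e₀ (G.ends e.1).2)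

/-- The graph obtained from `G` by subdividing the edge `e₀` with one new
vertex of degree two. -/
def subdivide (e₀ : G.E) : Multigraph where
  V := G.V ⊕ Unit
  E := {e : G.E // e ≠ e₀} ⊕ Bool
  fintypeV := inferInstance
  fintypeE := inferInstance
  decEqV := inferInstance
  decEqE := inferInstance
  ends := fun e => match e with
    | Sum.inl e => (Sum.inl (G.ends e.1).1, Sum.inl (G.ends e.1).2)
    | Sum.inr true => (Sum.inl (G.ends e₀).1, Sum.inr ())
    | Sum.inr false => (Sum.inr (), Sum.inl (G.ends e₀).2)

end Multigraph

/-- An isomorphism of multigraphs. -/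
structure Multigraph.Isom (G H : Multigraph) where
  vEquiv : G.V ≃ H.V
  eEquiv : G.E ≃ H.E
  ends_eq : ∀ e : G.E,
    H.ends (eEquiv e) = (vEquiv (G.ends e).1, vEquiv (G.ends e).2) ∨
    H.ends (eEquiv e) = (vEquiv (G.ends e).2, vEquiv (G.ends e).1)

namespace Multigraph

/-- `Y` is obtained from `X` by contracting one non-loop edge. -/
def ContractStep (X Y : Multigraph) : Prop :=
  ∃ e₀ : X.E, (X.ends e₀).1 ≠ (X.ends e₀).2 ∧ Nonempty (Isom Y (X.contract e₀))

/-- `H` is a weak minor of `G`: obtained from `G` by a (possibly empty)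
sequence of edge contractions (up to isomorphism). -/
def IsWeakMinor (H G : Multigraph) : Prop :=
  ∃ X : Multigraph, Relation.ReflTransGen ContractStep G X ∧ Nonempty (Isom H X)

/-- `Y` is obtained from `X` by subdividing one edge. -/
def SubdivideStep (X Y : Multigraph) : Prop :=
  ∃ e₀ : X.E, Nonempty (Isom Y (X.subdivide e₀))

/-- `H` is a subdivision of `G`. -/
def IsSubdivision (H G : Multigraph) : Prop :=
  ∃ X : Multigraph, Relation.ReflTransGen SubdivideStep G X ∧ Nonempty (Isom H X)

/-- The bouquet of circles `B n`: a single vertex with `n` loops. -/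
def bouquet (n : ℕ) : Multigraph where
  V := Unit
  E := Fin n
  fintypeV := inferInstance
  fintypeE := inferInstance
  decEqV := inferInstance
  decEqE := inferInstance
  ends := fun _ => ((), ())

end Multigraph

/-!
Contracting a non-loop edge `e₀` preserves the Betti number `β`, and `γ_M ≤ ⌊β/2⌋` holds for
every graph, so it suffices to transfer a rotation realising `γ_M(G) = ⌊β/2⌋ > 0` to `G / e₀`
with the same number of faces (one or two, by Euler's formula). Skipping the two darts of `e₀`
along the face permutation does this, unless the rotation fixes both darts of `e₀`: they then
form a face of their own, the remaining darts form a single face, and transposing two darts at a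
common vertex splits it into two again.
-/

open Equiv Relation

namespace Equiv.Perm

variable {α β : Type*}

noncomputable def numOrbits (σ : Perm α) : ℕ := Nat.card (Quot fun a b : α => b = σ a)

theorem eqvGen_iff_sameCycle (σ : Perm α) {x y : α} :
    EqvGen (fun a b => b = σ a) x y ↔ σ.SameCycle x y := by
  constructor
  · intro h
    refine (SameCycle.equivalence σ).eqvGen_iff.mp (EqvGen.mono (fun a b hab => ?_) _ _ h)
    rw [hab]
    exact sameCycle_apply_right.mpr (SameCycle.refl σ a)
  · rintro ⟨i, rfl⟩
    induction i using Int.induction_on with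
    | zero => exact EqvGen.refl x
    | succ i ih =>
      refine ih.trans _ _ _ (EqvGen.rel _ _ ?_)
      rw [add_comm (i : ℤ) 1, zpow_one_add, mul_apply]
    | pred i ih =>
      refine ih.trans _ _ _ (EqvGen.symm _ _ (EqvGen.rel _ _ ?_))
      rw [← mul_apply, ← zpow_one_add, add_sub_cancel]

theorem quot_mk_eq_iff_sameCycle (σ : Perm α) {x y : α} :
    Quot.mk (fun a b => b = σ a) x = Quot.mk _ y ↔ σ.SameCycle x y :=
  Quot.eq.trans σ.eqvGen_iff_sameCycle

theorem numOrbits_permCongr (e : α ≃ β) (σ : Perm α) :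
    (e.permCongr σ).numOrbits = σ.numOrbits :=
  (Nat.card_congr (Quot.congr e fun a b => by simp [permCongr_apply])).symm

theorem numOrbits_pos [Finite α] [Nonempty α] (σ : Perm α) : 0 < σ.numOrbits :=
  have : Nonempty (Quot fun a b : α => b = σ a) := ⟨Quot.mk _ (Classical.arbitrary α)⟩
  Nat.card_pos

theorem sameCycle_of_numOrbits_le_one [Finite α] {σ : Perm α} (h : σ.numOrbits ≤ 1)
    (x y : α) : σ.SameCycle x y :=
  σ.quot_mk_eq_iff_sameCycle.mp ((Finite.card_le_one_iff_subsingleton.mp h).elim _ _)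

section Swap

variable [Fintype α] [DecidableEq α]

theorem sign_of_forall_sameCycle {σ : Perm α} (hσ : ∀ x y, σ.SameCycle x y) {c d : α}
    (hcd : c ≠ d) : sign σ = -(-1) ^ Fintype.card α := by
  have hmoved : ∀ x, σ x ≠ x := fun x hx =>
    hcd (((hσ x c).eq_of_left hx).symm.trans ((hσ x d).eq_of_left hx))
  have hcycle : σ.IsCycle := ⟨c, hmoved c, fun y _ => hσ c y⟩
  rw [hcycle.sign, Finset.eq_univ_of_forall fun x => mem_support.mpr (hmoved x),
    Finset.card_univ]

theorem numOrbits_mul_swap_of_forall_sameCycle {σ : Perm α} (hσ : ∀ x y, σ.SameCycle x y)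
    {c d : α} (hcd : c ≠ d) : (σ * swap c d).numOrbits = 2 := by
  set τ := σ * swap c d
  have hcover : ∀ x, τ.SameCycle c x ∨ τ.SameCycle d x := by
    intro x
    obtain ⟨n, rfl⟩ := (hσ c x).exists_nat_pow_eq
    induction n with
    | zero => exact Or.inl (SameCycle.refl τ c)
    | succ n ih =>
      rw [pow_succ', mul_apply]
      set y := (σ ^ n) c
      by_cases hyc : y = c
      · have : σ y = τ d := by simp [τ, hyc]
        exact Or.inr (this ▸ sameCycle_apply_right.mpr (SameCycle.refl τ d))
      · by_cases hyd : y = d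
        · have : σ y = τ c := by simp [τ, hyd]
          exact Or.inl (this ▸ sameCycle_apply_right.mpr (SameCycle.refl τ c))
        · have : σ y = τ y := by simp [τ, swap_apply_of_ne_of_ne hyc hyd]
          rw [this, sameCycle_apply_right, sameCycle_apply_right]
          exact ih
  apply le_antisymm
  · refine (Nat.card_le_card_of_surjective (fun b : Bool => Quot.mk _ (if b then c else d))
      ?_).trans_eq (by simp)
    rintro ⟨x⟩
    rcases hcover x with h | h
    · exact ⟨true, (τ.quot_mk_eq_iff_sameCycle).mpr h⟩
    · exact ⟨false, (τ.quot_mk_eq_iff_sameCycle).mpr h⟩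
  -- A single orbit would make `σ` and `τ` full cycles of the same sign.
  · by_contra! h
    have hsign :=
      sign_of_forall_sameCycle (sameCycle_of_numOrbits_le_one (Nat.le_of_lt_succ h)) hcd
    rw [sign_mul, sign_swap hcd, sign_of_forall_sameCycle hσ hcd, mul_neg_one] at hsign
    exact units_ne_neg_self _ hsign.symm

end Swap

section FirstReturn

variable [Finite α] (σ : Perm α) (p : α → Prop)

theorem exists_pow_succ_apply (x : {x // p x}) : ∃ n, p ((σ ^ (n + 1)) x) :=
  ⟨orderOf σ - 1, by rw [Nat.sub_add_cancel (orderOf_pos σ), pow_orderOf_eq_one]; exact x.2⟩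

variable [DecidablePred p]

noncomputable def returnTime (x : {x // p x}) : ℕ := Nat.find (σ.exists_pow_succ_apply p x)

theorem returnTime_spec (x : {x // p x}) : p ((σ ^ (σ.returnTime p x + 1)) x) :=
  Nat.find_spec (σ.exists_pow_succ_apply p x)

theorem not_pow_succ_apply_of_lt_returnTime {x : {x // p x}} {m : ℕ}
    (hm : m < σ.returnTime p x) : ¬ p ((σ ^ (m + 1)) x) :=
  Nat.find_min _ hm

theorem pow_returnTime_injective :
    Function.Injective fun x : {x // p x} => (σ ^ (σ.returnTime p x + 1)) x := by
  intro x y h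
  wlog hxy : σ.returnTime p x ≤ σ.returnTime p y generalizing x y
  · exact (this h.symm (le_of_not_ge hxy)).symm
  obtain ⟨k, hk⟩ := Nat.exists_eq_add_of_le hxy
  have hyx : (σ ^ k) y = x := by
    apply (σ ^ (σ.returnTime p x + 1)).injective
    simp only at h
    rw [h, ← mul_apply, ← pow_add, hk, add_right_comm]
  cases k with
  | zero => exact Subtype.ext (by simpa using hyx.symm)
  | succ k =>
    exact absurd (hyx ▸ x.2) (σ.not_pow_succ_apply_of_lt_returnTime p (by omega))

noncomputable def firstReturn : Perm {x // p x} :=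
  Equiv.ofBijective (fun x => ⟨(σ ^ (σ.returnTime p x + 1)) x, σ.returnTime_spec p x⟩)
    (Finite.injective_iff_bijective.mp fun _ _ h =>
      σ.pow_returnTime_injective p (congrArg Subtype.val h))

theorem firstReturn_apply (x : {x // p x}) :
    (σ.firstReturn p x : α) = (σ ^ (σ.returnTime p x + 1)) x := rfl

theorem apply_firstReturn {γ : Type*} (f : α → γ) (hf : ∀ y, ¬ p y → f (σ y) = f y)
    (x : {x // p x}) : f (σ.firstReturn p x) = f (σ x) := by
  suffices ∀ m ≤ σ.returnTime p x, f ((σ ^ (m + 1)) x) = f (σ x) from this _ le_rfl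
  intro m hm
  induction m with
  | zero => rw [zero_add, pow_one]
  | succ m ih =>
    rw [pow_succ', mul_apply,
      hf _ (σ.not_pow_succ_apply_of_lt_returnTime p (Nat.lt_of_succ_le hm)), ih (by omega)]

theorem sameCycle_firstReturn_iff {x y : {x // p x}} :
    (σ.firstReturn p).SameCycle x y ↔ σ.SameCycle x y := by
  constructor
  · intro h
    rw [← eqvGen_iff_sameCycle] at h
    have hequiv : Equivalence fun a b : {x // p x} => σ.SameCycle a b :=
      ⟨fun a => SameCycle.refl σ a, SameCycle.symm, SameCycle.trans⟩
    refine hequiv.eqvGen_iff.mp (EqvGen.mono (fun a b hab => ?_) _ _ h)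
    rw [hab, firstReturn_apply]
    exact sameCycle_pow_right.mpr (SameCycle.refl σ a)
  · intro h
    obtain ⟨n, hn⟩ := h.exists_nat_pow_eq
    clear h
    induction n using Nat.strong_induction_on generalizing x with
    | _ n ih =>
      by_cases hlt : n < σ.returnTime p x + 1
      · cases n with
        | zero => exact Subtype.ext hn ▸ SameCycle.refl _ x
        | succ m => exact absurd (hn ▸ y.2) (σ.not_pow_succ_apply_of_lt_returnTime p (by omega))
      · obtain ⟨k, rfl⟩ := Nat.exists_eq_add_of_le (not_lt.mp hlt)
        refine sameCycle_apply_left.mp (ih k (by omega) (x := σ.firstReturn p x) ?_)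
        rw [firstReturn_apply, ← mul_apply, ← pow_add, add_comm, hn]

theorem numOrbits_firstReturn :
    (σ.firstReturn p).numOrbits =
      Nat.card {q : Quot (fun a b : α => b = σ a) // ∃ x, p x ∧ Quot.mk _ x = q} := by
  refine Nat.card_congr (Equiv.ofBijective
    (Quot.lift (fun x => ⟨Quot.mk _ x.1, x, x.2, rfl⟩) fun a b hab => Subtype.ext ?_) ⟨?_, ?_⟩)
  · rw [quot_mk_eq_iff_sameCycle, ← sameCycle_firstReturn_iff, hab]
    exact sameCycle_apply_right.mpr (SameCycle.refl _ a)
  · rintro ⟨a⟩ ⟨b⟩ hab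
    rw [quot_mk_eq_iff_sameCycle, sameCycle_firstReturn_iff, ← quot_mk_eq_iff_sameCycle]
    exact congrArg Subtype.val hab
  · rintro ⟨q, x, hx, rfl⟩
    exact ⟨Quot.mk _ ⟨x, hx⟩, rfl⟩

end FirstReturn

end Equiv.Perm

namespace Multigraph

variable (G : Multigraph)

def dartSymm : Perm (G.E × Bool) :=
  Function.Involutive.toPerm (fun d => (d.1, !d.2)) fun d => by simp

@[simp] theorem dartSymm_apply (d : G.E × Bool) : G.dartSymm d = (d.1, !d.2) := rfl

@[simp] theorem dartSymm_dartSymm (d : G.E × Bool) : G.dartSymm (G.dartSymm d) = d := by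
  simp

theorem dartSymm_mul_self : G.dartSymm * G.dartSymm = 1 :=
  Equiv.ext G.dartSymm_dartSymm

theorem dartSymm_inv : G.dartSymm⁻¹ = G.dartSymm :=
  inv_eq_of_mul_eq_one_right G.dartSymm_mul_self

theorem numFaces_eq_numOrbits (ρ : Perm (G.E × Bool)) :
    G.numFaces ρ = (ρ * G.dartSymm).numOrbits := rfl

theorem numFaces_pos [Nonempty G.E] (ρ : Perm (G.E × Bool)) : 0 < G.numFaces ρ :=
  (ρ * G.dartSymm).numOrbits_pos

theorem IsRotation.mul_swap {G : Multigraph} {ρ : Perm (G.E × Bool)} (hρ : G.IsRotation ρ)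
    {a b : G.E × Bool} (hab : G.dartV a = G.dartV b) : G.IsRotation (ρ * swap a b) := by
  intro d
  rw [Perm.mul_apply, hρ, swap_apply_def]
  split_ifs with h₁ h₂ <;> simp [*]

theorem exists_isRotation_numFaces_eq_two {ρ : Perm (G.E × Bool)} (hρ : G.IsRotation ρ)
    (hF : G.numFaces ρ = 1) (hcard : Fintype.card G.V < Fintype.card (G.E × Bool)) :
    ∃ ρ' : Perm (G.E × Bool), G.IsRotation ρ' ∧ G.numFaces ρ' = 2 := by
  obtain ⟨a, b, hab, hV⟩ := Fintype.exists_ne_map_eq_of_card_lt G.dartV hcard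
  refine ⟨ρ * swap a b, hρ.mul_swap hV, ?_⟩
  have hconj : swap a b * G.dartSymm = G.dartSymm * swap (G.dartSymm a) (G.dartSymm b) := by
    rw [swap_apply_apply, dartSymm_inv, ← mul_assoc, ← mul_assoc, dartSymm_mul_self, one_mul]
  rw [numFaces_eq_numOrbits, mul_assoc, hconj, ← mul_assoc]
  exact Perm.numOrbits_mul_swap_of_forall_sameCycle
    (Perm.sameCycle_of_numOrbits_le_one (G.numFaces_eq_numOrbits ρ ▸ hF.le))
    (G.dartSymm.injective.ne hab)

theorem eq_or_eq_dartSymm {x y : G.E × Bool} (h : x.1 = y.1) : y = x ∨ y = G.dartSymm x := by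
  obtain ⟨e, b⟩ := x
  obtain ⟨e', b'⟩ := y
  cases h
  cases b <;> cases b' <;> simp

theorem dartV_dartSymm_ne {x : G.E × Bool} (hne : (G.ends x.1).1 ≠ (G.ends x.1).2) :
    G.dartV (G.dartSymm x) ≠ G.dartV x := by
  obtain ⟨e, _ | _⟩ := x <;> simp [dartV, hne, Ne.symm hne]

theorem IsRotation.apply_eq_self_of_fst_eq {G : Multigraph} {ρ : Perm (G.E × Bool)}
    (hρ : G.IsRotation ρ) {x : G.E × Bool} (hne : (G.ends x.1).1 ≠ (G.ends x.1).2)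
    (h : (ρ x).1 = x.1) : ρ x = x := by
  refine (G.eq_or_eq_dartSymm h.symm).resolve_right fun hsymm => G.dartV_dartSymm_ne hne ?_
  rw [← hsymm, hρ]

theorem bddAbove_genera : BddAbove {g : ℕ | ∃ ρ : Perm (G.E × Bool), G.IsRotation ρ ∧
    (Fintype.card G.V : ℤ) - Fintype.card G.E + G.numFaces ρ = 2 - 2 * g} :=
  ⟨Fintype.card G.E + 1, fun g ⟨ρ, _, h⟩ => by omega⟩

theorem le_maxGenus {ρ : Perm (G.E × Bool)} (hρ : G.IsRotation ρ) {g : ℕ}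
    (h : (Fintype.card G.V : ℤ) - Fintype.card G.E + G.numFaces ρ = 2 - 2 * g) :
    g ≤ G.maxGenus :=
  le_csSup G.bddAbove_genera ⟨ρ, hρ, h⟩

theorem exists_isRotation_of_maxGenus_pos (h : 0 < G.maxGenus) :
    ∃ ρ : Perm (G.E × Bool), G.IsRotation ρ ∧
      (Fintype.card G.V : ℤ) - Fintype.card G.E + G.numFaces ρ = 2 - 2 * G.maxGenus := by
  refine Nat.sSup_mem (Set.nonempty_iff_ne_empty.mpr fun he => h.ne' ?_) G.bddAbove_genera
  rw [maxGenus, he, csSup_empty]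
  rfl

theorem maxGenus_le_betti_div_two [Nonempty G.V] : G.maxGenus ≤ G.betti / 2 := by
  refine csSup_le' fun g ⟨ρ, _, h⟩ => ?_
  have hV := Fintype.card_pos (α := G.V)
  unfold betti
  rcases isEmpty_or_nonempty G.E with hE | hE
  · have := Fintype.card_eq_zero (α := G.E)
    omega
  · have := G.numFaces_pos ρ
    omega

section Contract

variable (e₀ : G.E)

theorem card_contract_V (hne : (G.ends e₀).1 ≠ (G.ends e₀).2) :
    Fintype.card (G.contract e₀).V = Fintype.card G.V - 1 := by
  have hiff : ∀ u, (u = (G.ends e₀).1 ∨ u ≠ (G.ends e₀).2) ↔ u ≠ (G.ends e₀).2 :=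
    fun u => ⟨by rintro (rfl | h); exacts [hne, h], Or.inr⟩
  rw [← Fintype.card_subtype_eq (G.ends e₀).2, ← Fintype.card_subtype_compl]
  exact Fintype.card_congr (Equiv.subtypeEquivRight hiff)

theorem card_contract_E : Fintype.card (G.contract e₀).E = Fintype.card G.E - 1 := by
  rw [← Fintype.card_subtype_eq e₀, ← Fintype.card_subtype_compl]
  rfl

theorem betti_contract (hne : (G.ends e₀).1 ≠ (G.ends e₀).2) :
    (G.contract e₀).betti = G.betti := by
  have hV : 0 < Fintype.card G.V := Fintype.card_pos_iff.mpr ⟨(G.ends e₀).1⟩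
  have hE : 0 < Fintype.card G.E := Fintype.card_pos_iff.mpr ⟨e₀⟩
  unfold betti
  rw [card_contract_V _ _ hne, card_contract_E]
  omega

theorem contractEnd_fst_eq_snd :
    G.contractEnd e₀ (G.ends e₀).1 = G.contractEnd e₀ (G.ends e₀).2 := by
  unfold contractEnd
  split <;> simp

def contractDartEquiv : {d : G.E × Bool // d.1 ≠ e₀} ≃ (G.contract e₀).E × Bool :=
  Equiv.prodSubtypeFstEquivSubtypeProd (p := fun e => e ≠ e₀)

theorem contract_dartV (d : (G.contract e₀).E × Bool) :
    (G.contract e₀).dartV d = G.contractEnd e₀ (G.dartV ((G.contractDartEquiv e₀).symm d)) := by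
  rcases d with ⟨e, _ | _⟩ <;> rfl

-- Chosen so that its face permutation is the first-return map of the face permutation of `ρ`
-- to the darts off `e₀`.
noncomputable def contractRotation (ρ : Perm (G.E × Bool)) : Perm ((G.contract e₀).E × Bool) :=
  (G.contractDartEquiv e₀).permCongr ((ρ * G.dartSymm).firstReturn (·.1 ≠ e₀)) *
    (G.contract e₀).dartSymm

theorem isRotation_contractRotation {ρ : Perm (G.E × Bool)} (hρ : G.IsRotation ρ) :
    (G.contract e₀).IsRotation (G.contractRotation e₀ ρ) := by
  set f : G.E × Bool → (G.contract e₀).V := fun z => G.contractEnd e₀ (G.dartV z)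
  have hf : ∀ z, ¬ z.1 ≠ e₀ → f ((ρ * G.dartSymm) z) = f z := by
    rintro ⟨e, b⟩ hz
    obtain rfl := not_not.mp hz
    simp only [f, Perm.mul_apply, hρ _, dartSymm_apply]
    cases b
    · exact G.contractEnd_fst_eq_snd e
    · exact (G.contractEnd_fst_eq_snd e).symm
  intro d
  rw [contract_dartV, contract_dartV]
  change f _ = f _
  have hsymm : ((G.contractDartEquiv e₀).symm (G.contractRotation e₀ ρ d) : G.E × Bool) =
      (ρ * G.dartSymm).firstReturn _
        ((G.contractDartEquiv e₀).symm ((G.contract e₀).dartSymm d)) := by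
    simp [contractRotation, permCongr_apply]
  rw [hsymm, Perm.apply_firstReturn _ _ f hf]
  simp only [f, Perm.mul_apply, hρ _]
  rcases d with ⟨e, _ | _⟩ <;> rfl

theorem numFaces_contractRotation (ρ : Perm (G.E × Bool)) :
    (G.contract e₀).numFaces (G.contractRotation e₀ ρ) =
      Nat.card {q : Quot (fun a b => b = (ρ * G.dartSymm) a) //
        ∃ x : G.E × Bool, x.1 ≠ e₀ ∧ Quot.mk _ x = q} := by
  rw [numFaces_eq_numOrbits, contractRotation, mul_assoc, dartSymm_mul_self, mul_one,
    Perm.numOrbits_permCongr, Perm.numOrbits_firstReturn]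

theorem numFaces_contractRotation_of_not_forall (hne : (G.ends e₀).1 ≠ (G.ends e₀).2)
    {ρ : Perm (G.E × Bool)} (hρ : G.IsRotation ρ) (hmove : ¬ ∀ z, z.1 = e₀ → ρ z = z) :
    (G.contract e₀).numFaces (G.contractRotation e₀ ρ) = G.numFaces ρ := by
  rw [numFaces_contractRotation, numFaces_eq_numOrbits, Perm.numOrbits]
  refine Nat.card_congr (Equiv.subtypeUnivEquiv ?_)
  rintro ⟨z⟩
  by_cases hz : z.1 = e₀
  swap
  · exact ⟨z, hz, rfl⟩
  have hne' : (G.ends z.1).1 ≠ (G.ends z.1).2 := by rwa [hz]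
  have hstep : ∀ y, Quot.mk (fun a b => b = (ρ * G.dartSymm) a) ((ρ * G.dartSymm) y) =
      Quot.mk _ y := fun y => (Quot.sound (r := fun a b => b = (ρ * G.dartSymm) a) rfl).symm
  by_cases h₁ : ((ρ * G.dartSymm) z).1 = e₀
  swap
  · exact ⟨_, h₁, hstep z⟩
  have hfix₁ : ρ (G.dartSymm z) = G.dartSymm z :=
    hρ.apply_eq_self_of_fst_eq hne' (h₁.trans hz.symm)
  by_cases h₂ : (ρ z).1 = e₀
  · refine absurd (fun w hw => ?_) hmove
    have hfix₂ : ρ z = z := hρ.apply_eq_self_of_fst_eq hne' (h₂.trans hz.symm)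
    rcases G.eq_or_eq_dartSymm (hz.trans hw.symm) with rfl | rfl
    exacts [hfix₂, hfix₁]
  · refine ⟨ρ z, h₂, ?_⟩
    have : ρ z = (ρ * G.dartSymm) ((ρ * G.dartSymm) z) := by
      rw [Perm.mul_apply, Perm.mul_apply, hfix₁, dartSymm_dartSymm]
    rw [this, hstep, hstep]

theorem numFaces_contractRotation_lt {ρ : Perm (G.E × Bool)}
    (hfix : ∀ z, z.1 = e₀ → ρ z = z) :
    (G.contract e₀).numFaces (G.contractRotation e₀ ρ) < G.numFaces ρ := by
  rw [numFaces_contractRotation, numFaces_eq_numOrbits, Perm.numOrbits]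
  refine Finite.card_subtype_lt (x := Quot.mk _ (e₀, true)) ?_
  rintro ⟨x, hx, hxq⟩
  have hinv : ∀ z : G.E × Bool, z.1 = e₀ → ((ρ * G.dartSymm) z).1 = e₀ := fun z hz => by
    rw [Perm.mul_apply, hfix _ (by simpa using hz)]
    simpa using hz
  obtain ⟨n, rfl⟩ := ((Perm.quot_mk_eq_iff_sameCycle _).mp hxq).symm.exists_nat_pow_eq
  apply hx
  clear hx hxq
  induction n with
  | zero => rfl
  | succ n ih => rw [pow_succ', Perm.mul_apply]; exact hinv _ ih

end Contract

theorem exists_isRotation_contract {e₀ : G.E} (hne : (G.ends e₀).1 ≠ (G.ends e₀).2)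
    {ρ : Perm (G.E × Bool)} (hρ : G.IsRotation ρ) (hF : G.numFaces ρ ≤ 2)
    (hcard : Fintype.card G.V < Fintype.card G.E) :
    ∃ ρ' : Perm ((G.contract e₀).E × Bool),
      (G.contract e₀).IsRotation ρ' ∧ (G.contract e₀).numFaces ρ' = G.numFaces ρ := by
  by_cases hfix : ∀ z, z.1 = e₀ → ρ z = z
  -- The darts of `e₀` form a face of their own, lost in the contraction, so the rest of the darts
  -- form a single face, which is split in two.
  · have hV : 0 < Fintype.card G.V := Fintype.card_pos_iff.mpr ⟨(G.ends e₀).1⟩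
    have : Nonempty (G.contract e₀).E :=
      Fintype.card_pos_iff.mp (by rw [card_contract_E]; omega)
    have hlt := G.numFaces_contractRotation_lt e₀ hfix
    have hpos := (G.contract e₀).numFaces_pos (G.contractRotation e₀ ρ)
    obtain ⟨ρ', hρ', hF'⟩ := (G.contract e₀).exists_isRotation_numFaces_eq_two
      (G.isRotation_contractRotation e₀ hρ) (by omega) (by
        rw [Fintype.card_prod, Fintype.card_bool, card_contract_V _ _ hne, card_contract_E]
        omega)
    exact ⟨ρ', hρ', by omega⟩
  · exact ⟨_, G.isRotation_contractRotation e₀ hρ,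
      G.numFaces_contractRotation_of_not_forall e₀ hne hρ hfix⟩

theorem UpperEmbeddable.contract {G : Multigraph} (hU : G.UpperEmbeddable) {e₀ : G.E}
    (hne : (G.ends e₀).1 ≠ (G.ends e₀).2) : (G.contract e₀).UpperEmbeddable := by
  have : Nonempty (G.contract e₀).V := ⟨G.contractEnd e₀ (G.ends e₀).1⟩
  have hV : 0 < Fintype.card G.V := Fintype.card_pos_iff.mpr ⟨(G.ends e₀).1⟩
  refine le_antisymm (maxGenus_le_betti_div_two _) ?_
  rw [G.betti_contract e₀ hne, ← hU]
  rcases Nat.eq_zero_or_pos G.maxGenus with h0 | hpos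
  · exact h0 ▸ Nat.zero_le _
  obtain ⟨ρ, hρ, hEuler⟩ := G.exists_isRotation_of_maxGenus_pos hpos
  have hβ : G.maxGenus = (Fintype.card G.E + 1 - Fintype.card G.V) / 2 := hU
  obtain ⟨ρ', hρ', hF⟩ := G.exists_isRotation_contract hne hρ (by omega) (by omega)
  refine (G.contract e₀).le_maxGenus hρ' ?_
  rw [card_contract_V _ _ hne, card_contract_E, hF]
  omega

end Multigraph

namespace Multigraph.Isom

variable {H X : Multigraph}

def symm (i : Isom H X) : Isom X H where
  vEquiv := i.vEquiv.symm
  eEquiv := i.eEquiv.symm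
  ends_eq f := by
    rcases i.ends_eq (i.eEquiv.symm f) with h | h <;>
      rw [Equiv.apply_symm_apply] at h <;> simp [h]

def reversed (i : Isom H X) (e : H.E) : Bool :=
  decide (X.ends (i.eEquiv e) ≠ (i.vEquiv (H.ends e).1, i.vEquiv (H.ends e).2))

def dartEquiv (i : Isom H X) : (H.E × Bool) ≃ (X.E × Bool) where
  toFun d := (i.eEquiv d.1, xor (i.reversed d.1) d.2)
  invFun d := (i.eEquiv.symm d.1, xor (i.reversed (i.eEquiv.symm d.1)) d.2)
  left_inv := by rintro ⟨e, b⟩; simp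
  right_inv := by rintro ⟨f, b⟩; simp

theorem dartV_dartEquiv (i : Isom H X) (d : H.E × Bool) :
    X.dartV (i.dartEquiv d) = i.vEquiv (H.dartV d) := by
  obtain ⟨e, b⟩ := d
  by_cases h : X.ends (i.eEquiv e) = (i.vEquiv (H.ends e).1, i.vEquiv (H.ends e).2)
  · have hrev : i.reversed e = false := by simp [reversed, h]
    cases b <;> simp [dartEquiv, hrev, dartV, h]
  · have hrev : i.reversed e = true := by simp [reversed, h]
    cases b <;> simp [dartEquiv, hrev, dartV, (i.ends_eq e).resolve_left h]

theorem dartEquiv_dartSymm (i : Isom H X) (d : H.E × Bool) :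
    i.dartEquiv (H.dartSymm d) = X.dartSymm (i.dartEquiv d) := by
  obtain ⟨e, b⟩ := d
  simp [dartEquiv]

theorem exists_isRotation (i : Isom H X) {ρ : Perm (X.E × Bool)} (hρ : X.IsRotation ρ) :
    ∃ ρ' : Perm (H.E × Bool), H.IsRotation ρ' ∧ H.numFaces ρ' = X.numFaces ρ := by
  refine ⟨i.dartEquiv.symm.permCongr ρ, fun d => i.vEquiv.injective ?_, ?_⟩
  · rw [← dartV_dartEquiv, ← dartV_dartEquiv, permCongr_apply, symm_symm, apply_symm_apply, hρ]
  · have : i.dartEquiv.symm.permCongr ρ * H.dartSymm =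
        i.dartEquiv.symm.permCongr (ρ * X.dartSymm) := by
      ext d : 1
      simp only [Perm.mul_apply, permCongr_apply, symm_symm, dartEquiv_dartSymm]
    rw [numFaces_eq_numOrbits, numFaces_eq_numOrbits, this, Perm.numOrbits_permCongr]

theorem maxGenus_le (i : Isom H X) : X.maxGenus ≤ H.maxGenus := by
  rcases Nat.eq_zero_or_pos X.maxGenus with h | h
  · exact h ▸ Nat.zero_le _
  obtain ⟨ρ, hρ, hEuler⟩ := X.exists_isRotation_of_maxGenus_pos h
  obtain ⟨ρ', hρ', hF⟩ := i.exists_isRotation hρ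
  refine H.le_maxGenus hρ' ?_
  rwa [hF, Fintype.card_congr i.vEquiv, Fintype.card_congr i.eEquiv]

theorem betti_eq (i : Isom H X) : H.betti = X.betti := by
  rw [betti, betti, Fintype.card_congr i.vEquiv, Fintype.card_congr i.eEquiv]

end Multigraph.Isom

theorem Multigraph.UpperEmbeddable.of_isom {H X : Multigraph} (i : H.Isom X)
    (hX : X.UpperEmbeddable) : H.UpperEmbeddable := by
  rw [UpperEmbeddable, le_antisymm i.symm.maxGenus_le i.maxGenus_le, i.betti_eq]
  exact hX

theorem upperEmbeddable_of_isWeakMinor_general (G : Multigraph)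
    (hU : G.UpperEmbeddable) (H : Multigraph) (h : Multigraph.IsWeakMinor H G) :
    H.UpperEmbeddable := by
  obtain ⟨X, hGX, ⟨i⟩⟩ := h
  refine Multigraph.UpperEmbeddable.of_isom i ?_
  clear i
  induction hGX with
  | refl => exact hU
  | tail _ hstep ih =>
    obtain ⟨e₀, hne, ⟨j⟩⟩ := hstep
    exact (ih.contract hne).of_isom j

/-- a weak minor of an upper embeddable connected graph is
upper embeddable. -/
theorem upperEmbeddable_of_isWeakMinor (G : Multigraph) (hG : G.Connected)
    (hU : G.UpperEmbeddable) (H : Multigraph) (h : Multigraph.IsWeakMinor H G) :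
    H.UpperEmbeddable :=
  upperEmbeddable_of_isWeakMinor_general G hU H h
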